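/- arXiv:2505.07123 — 2 statements merged into one kernel-verified Lean document; each statement's English description precedes it below -/
import Mathlib

section
/- Lower bound in L_q for the δ-optimal recovery error: for any 2 ≤ q ≤ ∞ and any δ > 0, R_δ(A,W,L_q) ≥ |Q|^{1/q−1/2} · μ_{N_δ}/ξ_{N_δ}. -/
noncomputable section

open Filter MeasureTheory
open scoped ENNReal RealInnerProductSpace

variable {d : ℕ} (ν : MeasureTheory.Measure (EuclideanSpace ℝ (Fin d)))

/-- `f` belongs to the source set `W`. -/
def MemW (w : ℕ → Lp ℝ 2 ν) (ξ : ℕ → ℝ) (f : Lp ℝ 2 ν) : Prop :=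
  Summable fun k => ξ k ^ 2 * ⟪f, w k⟫ ^ 2

/-- The `W`-norm of `f`. -/
def normW (w : ℕ → Lp ℝ 2 ν) (ξ : ℕ → ℝ) (f : Lp ℝ 2 ν) : ℝ :=
  Real.sqrt (∑' k, ξ k ^ 2 * ⟪f, w k⟫ ^ 2)

/-- The unbounded operator `A`, defined spectrally by `A f = ∑ μ_k ⟨f, w_k⟩ w_k`. -/
def opA (w : ℕ → Lp ℝ 2 ν) (μ : ℕ → ℝ) (f : Lp ℝ 2 ν) : Lp ℝ 2 ν :=
  ∑' k, (μ k * ⟪f, w k⟫) • w k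

/-- The worst case recovery error `ε_δ(A, W, G, Ψ, L_q)` of the pair `(G, Ψ)`,
measured in the `L_q` (semi)norm, `q = p`. -/
def recErrLq (w : ℕ → Lp ℝ 2 ν) (μ ξ : ℕ → ℝ) (p : ℝ≥0∞) (δ : ℝ) {N : ℕ}
    (G : Lp ℝ 2 ν → Fin N → ℝ) (Ψ : (Fin N → ℝ) → Lp ℝ p ν) : ℝ≥0∞ :=
  ⨆ (f : Lp ℝ 2 ν) (_ : MemW ν w ξ f ∧ normW ν w ξ f ≤ 1)
    (fδ : Lp ℝ 2 ν) (_ : ‖f - fδ‖ ≤ δ),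
      eLpNorm (fun x => (opA ν w μ f : EuclideanSpace ℝ (Fin d) → ℝ) x -
        (Ψ (G fδ) : EuclideanSpace ℝ (Fin d) → ℝ) x) p ν

/-- The `(N,δ)`-optimal recovery error `R_{N,δ}(A, W, L_q)`, `q = p`. -/
def RoptLq (w : ℕ → Lp ℝ 2 ν) (μ ξ : ℕ → ℝ) (p : ℝ≥0∞) (δ : ℝ) (N : ℕ) : ℝ≥0∞ :=
  ⨅ (G : Lp ℝ 2 ν → Fin N → ℝ) (_ : Continuous G) (Ψ : (Fin N → ℝ) → Lp ℝ p ν),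
    recErrLq ν w μ ξ p δ G Ψ

/-- The `δ`-optimal recovery error `R_δ(A, W, L_q)`, `q = p`. -/
def RoptAllLq (w : ℕ → Lp ℝ 2 ν) (μ ξ : ℕ → ℝ) (p : ℝ≥0∞) (δ : ℝ) : ℝ≥0∞ :=
  ⨅ N : ℕ, RoptLq ν w μ ξ p δ N

/-- The critical index `N_δ = min {N ≥ 0 : ξ_N ≥ 1/δ}`. -/
def Ncrit (ξ : ℕ → ℝ) (δ : ℝ) : ℕ := sInf {N : ℕ | 1 / δ ≤ ξ N}

/-- The information map of the truncation method: the first `N` Fourier coefficients. -/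
def Gtrunc (w : ℕ → Lp ℝ 2 ν) (N : ℕ) (f : Lp ℝ 2 ν) : Fin N → ℝ := fun k => ⟪f, w k⟫

/-- The recovery algorithm of the truncation method (as an element of `L_2`). -/
def Psitrunc (w : ℕ → Lp ℝ 2 ν) (μ : ℕ → ℝ) (N : ℕ) (x : Fin N → ℝ) : Lp ℝ 2 ν :=
  ∑ k : Fin N, (μ k * x k) • w k

/-- The worst case `L_q`-error of the truncation method, `q = p`. -/
def truncErrLq (w : ℕ → Lp ℝ 2 ν) (μ ξ : ℕ → ℝ) (p : ℝ≥0∞) (δ : ℝ) (N : ℕ) : ℝ≥0∞ :=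
  ⨆ (f : Lp ℝ 2 ν) (_ : MemW ν w ξ f ∧ normW ν w ξ f ≤ 1)
    (fδ : Lp ℝ 2 ν) (_ : ‖f - fδ‖ ≤ δ),
      eLpNorm (fun x => (opA ν w μ f : EuclideanSpace ℝ (Fin d) → ℝ) x -
        (Psitrunc ν w μ N (Gtrunc ν w N fδ) : EuclideanSpace ℝ (Fin d) → ℝ) x) p ν

variable {w : ℕ → Lp ℝ 2 ν} (n : ℕ) (s : ℝ)

lemma inner_smul_basis (hw : Orthonormal ℝ w) (k : ℕ) :
    ⟪(s • w n : Lp ℝ 2 ν), w k⟫ = s * (if n = k then 1 else 0) := by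
  rw [real_inner_smul_left, orthonormal_iff_ite.mp hw]

lemma memW_smul_basis (hw : Orthonormal ℝ w) (ξ : ℕ → ℝ) : MemW ν w ξ (s • w n) := by
  apply summable_of_ne_finset_zero (s := {n})
  intro k hk
  simp only [Finset.mem_singleton] at hk
  rw [inner_smul_basis ν n s hw, if_neg (fun h => hk h.symm)]
  ring

lemma normW_smul_basis (hw : Orthonormal ℝ w) (ξ : ℕ → ℝ) (hξ : 0 ≤ ξ n) :
    normW ν w ξ (s • w n) = ξ n * |s| := by
  rw [normW, tsum_eq_single n]
  · rw [inner_smul_basis ν n s hw, if_pos rfl, mul_one, ← mul_pow,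
      Real.sqrt_sq_eq_abs, abs_mul, abs_of_nonneg hξ]
  · intro k hk
    rw [inner_smul_basis ν n s hw, if_neg (fun h => hk h.symm)]
    ring

lemma opA_smul_basis (hw : Orthonormal ℝ w) (μ : ℕ → ℝ) :
    opA ν w μ (s • w n) = (μ n * s) • w n := by
  rw [opA, tsum_eq_single n]
  · rw [inner_smul_basis ν n s hw, if_pos rfl, mul_one]
  · intro k hk
    rw [inner_smul_basis ν n s hw, if_neg (fun h => hk h.symm), mul_zero, mul_zero, zero_smul]

lemma le_recErr (w : ℕ → Lp ℝ 2 ν) (μ ξ : ℕ → ℝ) (p : ℝ≥0∞) (δ : ℝ) {N : ℕ}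
    (G : Lp ℝ 2 ν → Fin N → ℝ) (Ψ : (Fin N → ℝ) → Lp ℝ p ν)
    (f fδ : Lp ℝ 2 ν) (h1 : MemW ν w ξ f ∧ normW ν w ξ f ≤ 1) (h2 : ‖f - fδ‖ ≤ δ) :
    eLpNorm (fun x => (opA ν w μ f : EuclideanSpace ℝ (Fin d) → ℝ) x -
        (Ψ (G fδ) : EuclideanSpace ℝ (Fin d) → ℝ) x) p ν ≤ recErrLq ν w μ ξ p δ G Ψ := by
  refine le_trans ?_ (le_iSup _ f)
  rw [iSup_pos h1]
  refine le_trans ?_ (le_iSup _ fδ)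
  rw [iSup_pos h2]


set_option maxHeartbeats 1000000 in
/-- lower bound in `L_q` for the `δ`-optimal recovery error. -/
theorem stmt13
    (Q : Set (EuclideanSpace ℝ (Fin d))) (hQc : IsCompact Q)
    (hQ0 : 0 < MeasureTheory.volume Q) (hQfin : MeasureTheory.volume Q < ⊤)
    (w : ℕ → Lp ℝ 2 (MeasureTheory.volume.restrict Q)) (hw_on : Orthonormal ℝ w)
    (hw_dense : Dense (Submodule.span ℝ (Set.range w) : Set (Lp ℝ 2 (MeasureTheory.volume.restrict Q))))
    (χ : ℝ) (hχ : 0 < χ)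
    (hw_cont : ∀ k : ℕ, ∃ g : EuclideanSpace ℝ (Fin d) → ℝ, ContinuousOn g Q ∧
      (∀ x ∈ Q, |g x| ≤ χ) ∧ (w k : EuclideanSpace ℝ (Fin d) → ℝ) =ᵐ[MeasureTheory.volume.restrict Q] g)
    (μ ξ : ℕ → ℝ)
    (hμ0 : 0 < μ 0) (hμmono : Monotone μ) (hμtop : Tendsto μ atTop atTop)
    (hξ0 : 0 < ξ 0) (hξmono : Monotone ξ) (hξtop : Tendsto ξ atTop atTop)
    (hanti : Antitone fun k => μ k / ξ k)
    (hratio : Tendsto (fun k => μ k / ξ k) atTop (nhds 0)) :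
    ∀ p : ℝ≥0∞, 2 ≤ p → ∀ δ : ℝ, 0 < δ →
      MeasureTheory.volume Q ^ ((1 / p).toReal - 1 / 2) *
          ENNReal.ofReal (μ (Ncrit ξ δ) / ξ (Ncrit ξ δ)) ≤
        RoptAllLq (MeasureTheory.volume.restrict Q) w μ ξ p δ := by
  intro p hp δ hδ
  have hν : True := trivial
  set n := Ncrit ξ δ with hn
  have hne : {N : ℕ | 1 / δ ≤ ξ N}.Nonempty := (hξtop.eventually_ge_atTop (1 / δ)).exists
  have hξn : 1 / δ ≤ ξ n := Nat.sInf_mem hne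
  have hξnpos : 0 < ξ n := lt_of_lt_of_le (by positivity) hξn
  have hμn : 0 < μ n := lt_of_lt_of_le hμ0 (hμmono (Nat.zero_le n))
  set s : ℝ := (ξ n)⁻¹ with hs
  have hspos : 0 < s := inv_pos.mpr hξnpos
  have hsδ : s ≤ δ := by
    rw [hs, ← one_div]
    rw [div_le_iff₀ hξnpos]
    rw [div_le_iff₀ hδ] at hξn
    linarith [mul_comm δ (ξ n)]
  set f₁ : Lp ℝ 2 (MeasureTheory.volume.restrict Q) := s • w n with hf₁
  set f₂ : Lp ℝ 2 (MeasureTheory.volume.restrict Q) := (-s) • w n with hf₂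
  have hmem₁ : MemW (MeasureTheory.volume.restrict Q) w ξ f₁ ∧ normW (MeasureTheory.volume.restrict Q) w ξ f₁ ≤ 1 := by
    refine ⟨memW_smul_basis (MeasureTheory.volume.restrict Q) n s hw_on ξ, ?_⟩
    rw [hf₁, normW_smul_basis (MeasureTheory.volume.restrict Q) n s hw_on ξ hξnpos.le, abs_of_pos hspos, hs,
      mul_inv_cancel₀ hξnpos.ne']
  have hmem₂ : MemW (MeasureTheory.volume.restrict Q) w ξ f₂ ∧ normW (MeasureTheory.volume.restrict Q) w ξ f₂ ≤ 1 := by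
    refine ⟨memW_smul_basis (MeasureTheory.volume.restrict Q) n (-s) hw_on ξ, ?_⟩
    rw [hf₂, normW_smul_basis (MeasureTheory.volume.restrict Q) n (-s) hw_on ξ hξnpos.le, abs_neg, abs_of_pos hspos, hs,
      mul_inv_cancel₀ hξnpos.ne']
  have hwn1 : ‖w n‖ = 1 := hw_on.1 n
  have hnear₁ : ‖f₁ - 0‖ ≤ δ := by
    rw [sub_zero, hf₁, norm_smul, hwn1, mul_one, Real.norm_eq_abs, abs_of_pos hspos]
    exact hsδ
  have hnear₂ : ‖f₂ - 0‖ ≤ δ := by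
    rw [sub_zero, hf₂, norm_smul, hwn1, mul_one, Real.norm_eq_abs, abs_neg, abs_of_pos hspos]
    exact hsδ
  set A₁ := opA (MeasureTheory.volume.restrict Q) w μ f₁ with hA₁
  set A₂ := opA (MeasureTheory.volume.restrict Q) w μ f₂ with hA₂
  have hA₁e : A₁ = (μ n * s) • w n := opA_smul_basis (MeasureTheory.volume.restrict Q) n s hw_on μ
  have hA₂e : A₂ = (μ n * (-s)) • w n := opA_smul_basis (MeasureTheory.volume.restrict Q) n (-s) hw_on μ
  have hsub : A₁ - A₂ = (2 * (μ n * s)) • w n := by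
    rw [hA₁e, hA₂e, ← sub_smul]
    congr 1
    ring
  have hnormsub : ‖A₁ - A₂‖ = 2 * (μ n * s) := by
    rw [hsub, norm_smul, hwn1, mul_one, Real.norm_eq_abs, abs_of_pos (by positivity)]
  -- the difference function
  set D : EuclideanSpace ℝ (Fin d) → ℝ := fun x => A₁ x - A₂ x with hD
  have hDmeas : AEStronglyMeasurable D (MeasureTheory.volume.restrict Q) :=
    (Lp.aestronglyMeasurable A₁).sub (Lp.aestronglyMeasurable A₂)
  have hD2 : eLpNorm D 2 (MeasureTheory.volume.restrict Q) = ENNReal.ofReal (2 * (μ n * s)) := by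
    have hae : D =ᵐ[(MeasureTheory.volume.restrict Q)] ⇑(A₁ - A₂) := (Lp.coeFn_sub A₁ A₂).symm
    rw [eLpNorm_congr_ae hae, ← hnormsub, Lp.norm_def,
      ENNReal.ofReal_toReal (Lp.eLpNorm_ne_top _)]
  -- Hölder comparison
  have hH : eLpNorm D 2 (MeasureTheory.volume.restrict Q) ≤ eLpNorm D p (MeasureTheory.volume.restrict Q) *
      (MeasureTheory.volume Q) ^ (1 / (2 : ℝ≥0∞).toReal - 1 / p.toReal) := by
    have := eLpNorm_le_eLpNorm_mul_rpow_measure_univ hp hDmeas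
    rwa [Measure.restrict_apply_univ] at this
  set e : ℝ := (1 / p).toReal - 1 / 2 with he
  set b : ℝ := 1 / (2 : ℝ≥0∞).toReal - 1 / p.toReal with hb
  have heb : e + b = 0 := by
    rw [he, hb]
    simp [one_div, ENNReal.toReal_inv]
  have hvol0 : (MeasureTheory.volume Q) ≠ 0 := hQ0.ne'
  have hvoltop : (MeasureTheory.volume Q) ≠ ⊤ := hQfin.ne
  have hcancel : (MeasureTheory.volume Q) ^ e * (MeasureTheory.volume Q) ^ b = 1 := by
    rw [← ENNReal.rpow_add e b hvol0 hvoltop, heb, ENNReal.rpow_zero]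
  have hkey : (MeasureTheory.volume Q) ^ e * ENNReal.ofReal (2 * (μ n * s)) ≤ eLpNorm D p (MeasureTheory.volume.restrict Q) := by
    calc (MeasureTheory.volume Q) ^ e * ENNReal.ofReal (2 * (μ n * s))
        = (MeasureTheory.volume Q) ^ e * eLpNorm D 2 (MeasureTheory.volume.restrict Q) := by rw [hD2]
      _ ≤ (MeasureTheory.volume Q) ^ e * (eLpNorm D p (MeasureTheory.volume.restrict Q) * (MeasureTheory.volume Q) ^ b) := by
          exact mul_le_mul_right hH _
      _ = eLpNorm D p (MeasureTheory.volume.restrict Q) * ((MeasureTheory.volume Q) ^ e * (MeasureTheory.volume Q) ^ b) := by ring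
      _ = eLpNorm D p (MeasureTheory.volume.restrict Q) := by rw [hcancel, mul_one]
  -- main bound against any method
  rw [RoptAllLq]
  refine le_iInf fun N => ?_
  rw [RoptLq]
  refine le_iInf fun G => le_iInf fun _ => le_iInf fun Ψ => ?_
  set g := Ψ (G (0 : Lp ℝ 2 (MeasureTheory.volume.restrict Q))) with hg
  set E₁ := eLpNorm (fun x => (A₁ : EuclideanSpace ℝ (Fin d) → ℝ) x -
      (g : EuclideanSpace ℝ (Fin d) → ℝ) x) p (MeasureTheory.volume.restrict Q) with hE₁d
  set E₂ := eLpNorm (fun x => (A₂ : EuclideanSpace ℝ (Fin d) → ℝ) x -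
      (g : EuclideanSpace ℝ (Fin d) → ℝ) x) p (MeasureTheory.volume.restrict Q) with hE₂d
  have hE₁ : E₁ ≤ recErrLq (MeasureTheory.volume.restrict Q) w μ ξ p δ G Ψ := le_recErr (MeasureTheory.volume.restrict Q) w μ ξ p δ G Ψ f₁ 0 hmem₁ hnear₁
  have hE₂ : E₂ ≤ recErrLq (MeasureTheory.volume.restrict Q) w μ ξ p δ G Ψ := le_recErr (MeasureTheory.volume.restrict Q) w μ ξ p δ G Ψ f₂ 0 hmem₂ hnear₂
  have hp1 : (1 : ℝ≥0∞) ≤ p := le_trans (by norm_num) hp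
  have htri : eLpNorm D p (MeasureTheory.volume.restrict Q) ≤ E₁ + E₂ := by
    have hDeq : D = (fun x => (A₁ : EuclideanSpace ℝ (Fin d) → ℝ) x - g x) +
        (fun x => g x - (A₂ : EuclideanSpace ℝ (Fin d) → ℝ) x) := by
      funext x
      simp [hD, sub_add_sub_cancel]
    have h1 : AEStronglyMeasurable (fun x => (A₁ : EuclideanSpace ℝ (Fin d) → ℝ) x - g x) (MeasureTheory.volume.restrict Q) :=
      (Lp.aestronglyMeasurable A₁).sub (Lp.aestronglyMeasurable g)
    have h2 : AEStronglyMeasurable (fun x => g x - (A₂ : EuclideanSpace ℝ (Fin d) → ℝ) x) (MeasureTheory.volume.restrict Q) :=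
      (Lp.aestronglyMeasurable g).sub (Lp.aestronglyMeasurable A₂)
    have := eLpNorm_add_le h1 h2 hp1
    rw [← hDeq] at this
    refine this.trans ?_
    have hswap : eLpNorm (fun x => g x - (A₂ : EuclideanSpace ℝ (Fin d) → ℝ) x) p (MeasureTheory.volume.restrict Q) = E₂ := by
      rw [hE₂d]
      have : (fun x => g x - (A₂ : EuclideanSpace ℝ (Fin d) → ℝ) x) =
          -(fun x => (A₂ : EuclideanSpace ℝ (Fin d) → ℝ) x - g x) := by
        funext x; simp [neg_sub]
      rw [this, eLpNorm_neg]
    rw [hswap]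
  -- combine
  have h2T : 2 * ((MeasureTheory.volume Q) ^ e * ENNReal.ofReal (μ n / ξ n)) =
      (MeasureTheory.volume Q) ^ e * ENNReal.ofReal (2 * (μ n * s)) := by
    rw [div_eq_mul_inv, ← hs, ENNReal.ofReal_mul (by norm_num : (0:ℝ) ≤ 2)]
    rw [ENNReal.ofReal_ofNat]
    ring
  have hfinal : 2 * ((MeasureTheory.volume Q) ^ e * ENNReal.ofReal (μ n / ξ n)) ≤
      2 * recErrLq (MeasureTheory.volume.restrict Q) w μ ξ p δ G Ψ := by
    rw [h2T]
    calc (MeasureTheory.volume Q) ^ e * ENNReal.ofReal (2 * (μ n * s))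
        ≤ eLpNorm D p (MeasureTheory.volume.restrict Q) := hkey
      _ ≤ E₁ + E₂ := htri
      _ ≤ recErrLq (MeasureTheory.volume.restrict Q) w μ ξ p δ G Ψ + recErrLq (MeasureTheory.volume.restrict Q) w μ ξ p δ G Ψ := add_le_add hE₁ hE₂
      _ = 2 * recErrLq (MeasureTheory.volume.restrict Q) w μ ξ p δ G Ψ := (two_mul _).symm
  exact (ENNReal.mul_le_mul_iff_right (by norm_num) (by norm_num)).mp hfinal
end
end

section
/- Upper bound in L_q for the truncation method: assume additionally that there are constants c₁, c₂ > 0 such that for every N, (Σ_{k=0}^{N} μ_k²)^{1/2} ≤ c₁ μ_N and (Σ_{k=N}^{∞} μ_k²/ξ_k²)^{1/2} ≤ c₂ μ_N/ξ_N. Then for any 2 ≤ q ≤ ∞, any δ > 0 and any N ≥ 1, ε_δ(A,W,G̃_N,Ψ̃_N,L_q) ≤ max{c₁,c₂} · |Q|^{1/q} · χ · ( μ_N/ξ_N + δ μ_{N−1} ). -/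
/-!
Split `A f - Ψ̃_N (G̃_N f^δ)` into the head `∑_{k<N} μ_k ⟨f - f^δ, w_k⟩ w_k` and the tail
`∑_{k≥N} μ_k ⟨f, w_k⟩ w_k`. As every `w_k` is bounded by `χ`, each part is bounded pointwise
by `χ` times the `ℓ¹` norm of its coefficients, and a pointwise bound `B` on `Q` gives
`‖·‖_q ≤ |Q|^{1/q} B`. Cauchy–Schwarz and Bessel's inequality bound the head coefficients by
`c₁ μ_{N-1} δ`; Cauchy–Schwarz for the factorisation `μ_k ⟨f, w_k⟩ = (μ_k / ξ_k) (ξ_k ⟨f, w_k⟩)`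
bounds the tail coefficients by `c₂ (μ_N / ξ_N) ‖f‖_W`.
-/

noncomputable section

open Filter MeasureTheory
open scoped ENNReal RealInnerProductSpace

variable {d : ℕ} (ν : MeasureTheory.Measure (EuclideanSpace ℝ (Fin d)))

namespace MeasureTheory.Lp

variable {α E : Type*} {m : MeasurableSpace α} [NormedAddCommGroup E] {p : ℝ≥0∞}
  {ρ : Measure α}

theorem ae_norm_smul_le {𝕜 : Type*} [NormedRing 𝕜] [Module 𝕜 E] [IsBoundedSMul 𝕜 E]
    (c : 𝕜) {g : Lp E p ρ} {B : ℝ} (hg : ∀ᵐ x ∂ρ, ‖g x‖ ≤ B) :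
    ∀ᵐ x ∂ρ, ‖(c • g) x‖ ≤ ‖c‖ * B := by
  filter_upwards [coeFn_smul c g, hg] with x hcg hgx
  rw [hcg, Pi.smul_apply]
  exact (norm_smul_le c (g x)).trans (by gcongr)

theorem ae_norm_sum_le {ι : Type*} (s : Finset ι) {f : ι → Lp E p ρ} {b : ι → ℝ}
    (h : ∀ i, ∀ᵐ x ∂ρ, ‖f i x‖ ≤ b i) : ∀ᵐ x ∂ρ, ‖(∑ i ∈ s, f i) x‖ ≤ ∑ i ∈ s, b i := by
  classical
  induction s using Finset.induction_on with
  | empty =>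
    filter_upwards [coeFn_zero E p ρ] with x hx
    rw [Finset.sum_empty, Finset.sum_empty, hx, Pi.zero_apply]
    simp
  | insert i s hi ih =>
    filter_upwards [coeFn_add (f i) (∑ j ∈ s, f j), h i, ih] with x hadd hix hsx
    rw [Finset.sum_insert hi, Finset.sum_insert hi, hadd, Pi.add_apply]
    exact (norm_add_le _ _).trans (add_le_add hix hsx)

variable [Fact (1 ≤ p)]

theorem ae_norm_le_of_tendsto {F : ℕ → Lp E p ρ} {g : Lp E p ρ} {B : ℝ}
    (hF : Tendsto F atTop (nhds g)) (hB : ∀ n, ∀ᵐ x ∂ρ, ‖F n x‖ ≤ B) :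
    ∀ᵐ x ∂ρ, ‖g x‖ ≤ B := by
  obtain ⟨φ, -, hφ⟩ := (tendstoInMeasure_of_tendsto_Lp hF).exists_seq_tendsto_ae
  filter_upwards [ae_all_iff.2 hB, hφ] with x hBx hφx
  exact le_of_tendsto' hφx.norm fun n => hBx (φ n)

theorem ae_norm_tsum_le {f : ℕ → Lp E p ρ} {b : ℕ → ℝ} (hf : Summable f) (hb : Summable b)
    (hb0 : ∀ k, 0 ≤ b k) (h : ∀ k, ∀ᵐ x ∂ρ, ‖f k x‖ ≤ b k) :
    ∀ᵐ x ∂ρ, ‖(∑' k, f k) x‖ ≤ ∑' k, b k :=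
  ae_norm_le_of_tendsto hf.hasSum.tendsto_sum_nat fun _ =>
    (ae_norm_sum_le _ h).mono fun _ hx => hx.trans (hb.sum_le_tsum _ fun k _ => hb0 k)

end MeasureTheory.Lp

theorem MeasureTheory.ae_restrict_norm_le_of_ae_eq {α E : Type*} {m : MeasurableSpace α}
    [NormedAddCommGroup E] {ρ : Measure α} {s : Set α} {f g : α → E} {C : ℝ}
    (hs : MeasurableSet s) (hfg : f =ᵐ[ρ.restrict s] g) (hg : ∀ x ∈ s, ‖g x‖ ≤ C) :
    ∀ᵐ x ∂ρ.restrict s, ‖f x‖ ≤ C := by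
  filter_upwards [hfg, ae_restrict_mem hs] with x hfgx hx
  exact hfgx ▸ hg x hx

namespace Real

variable {ι : Type*} {f g : ι → ℝ}

theorem summable_mul_of_summable_sq (hf : Summable fun i => f i ^ 2)
    (hg : Summable fun i => g i ^ 2) : Summable fun i => f i * g i :=
  ((hf.add hg).div_const 2).of_norm_bounded fun i => by
    rw [norm_mul, Real.norm_eq_abs, Real.norm_eq_abs, ← sq_abs (f i), ← sq_abs (g i)]
    nlinarith [sq_nonneg (|f i| - |g i|)]

theorem tsum_mul_le_sqrt_mul_sqrt (hf : Summable fun i => f i ^ 2)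
    (hg : Summable fun i => g i ^ 2) :
    ∑' i, f i * g i ≤ √(∑' i, f i ^ 2) * √(∑' i, g i ^ 2) :=
  (summable_mul_of_summable_sq hf hg).tsum_le_of_sum_le fun s =>
    (sum_mul_le_sqrt_mul_sqrt s f g).trans <| by
      gcongr
      exacts [hf.sum_le_tsum _ fun _ _ => sq_nonneg _, hg.sum_le_tsum _ fun _ _ => sq_nonneg _]

theorem abs_mul_eq_abs_div_mul_abs_mul {μ ξ a : ℝ} (hξ : ξ ≠ 0) :
    |μ * a| = |μ / ξ| * |ξ * a| := by
  rw [← abs_mul]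
  field_simp

variable {μ ξ a : ι → ℝ}

theorem summable_abs_mul_of_summable_div_sq (hξ : ∀ i, ξ i ≠ 0)
    (hμξ : Summable fun i => (μ i / ξ i) ^ 2) (ha : Summable fun i => ξ i ^ 2 * a i ^ 2) :
    Summable fun i => |μ i * a i| := by
  rw [funext fun i => abs_mul_eq_abs_div_mul_abs_mul (a := a i) (hξ i)]
  exact summable_mul_of_summable_sq (by simpa only [sq_abs] using hμξ)
    (by simpa only [sq_abs, mul_pow] using ha)

theorem tsum_abs_mul_le_of_summable_div_sq (hξ : ∀ i, ξ i ≠ 0)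
    (hμξ : Summable fun i => (μ i / ξ i) ^ 2) (ha : Summable fun i => ξ i ^ 2 * a i ^ 2) :
    ∑' i, |μ i * a i| ≤ √(∑' i, (μ i / ξ i) ^ 2) * √(∑' i, ξ i ^ 2 * a i ^ 2) := by
  rw [funext fun i => abs_mul_eq_abs_div_mul_abs_mul (a := a i) (hξ i)]
  simpa only [sq_abs, mul_pow] using
    tsum_mul_le_sqrt_mul_sqrt (f := fun i => |μ i / ξ i|) (g := fun i => |ξ i * a i|)
      (by simpa only [sq_abs] using hμξ) (by simpa only [sq_abs, mul_pow] using ha)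

theorem tsum_abs_mul_nat_add_le {μ ξ a : ℕ → ℝ} (hξ : ∀ k, ξ k ≠ 0)
    (hμξ : Summable fun k => (μ k / ξ k) ^ 2) (ha : Summable fun k => ξ k ^ 2 * a k ^ 2)
    (N : ℕ) : ∑' k, |μ (k + N) * a (k + N)| ≤
      √(∑' k, (μ (k + N) / ξ (k + N)) ^ 2) * √(∑' k, ξ k ^ 2 * a k ^ 2) := by
  refine (tsum_abs_mul_le_of_summable_div_sq (fun k => hξ (k + N))
    (hμξ.comp_injective (add_left_injective N))
    (ha.comp_injective (add_left_injective N))).trans ?_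
  exact mul_le_mul_of_nonneg_left (sqrt_le_sqrt <|
    tsum_comp_le_tsum_of_inj ha (fun k => by positivity) (add_left_injective N)) (sqrt_nonneg _)

end Real

theorem Orthonormal.sum_abs_mul_inner_le {ι E : Type*} [NormedAddCommGroup E]
    [InnerProductSpace ℝ E] {v : ι → E} (hv : Orthonormal ℝ v) (s : Finset ι) (c : ι → ℝ)
    (x : E) : ∑ i ∈ s, |c i * ⟪x, v i⟫| ≤ √(∑ i ∈ s, c i ^ 2) * ‖x‖ := by
  have hbessel : ∑ i ∈ s, |⟪x, v i⟫| ^ 2 ≤ ‖x‖ ^ 2 := by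
    simpa only [real_inner_comm, Real.norm_eq_abs] using hv.sum_inner_products_le (s := s) x
  calc ∑ i ∈ s, |c i * ⟪x, v i⟫| = ∑ i ∈ s, |c i| * |⟪x, v i⟫| := by simp_rw [abs_mul]
    _ ≤ √(∑ i ∈ s, |c i| ^ 2) * √(∑ i ∈ s, |⟪x, v i⟫| ^ 2) :=
      Real.sum_mul_le_sqrt_mul_sqrt _ _ _
    _ ≤ √(∑ i ∈ s, c i ^ 2) * ‖x‖ := by
      simp_rw [sq_abs] at hbessel ⊢
      gcongr
      exact (Real.sqrt_le_sqrt hbessel).trans_eq (Real.sqrt_sq (norm_nonneg x))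

section Truncation

variable {ν} {w : ℕ → Lp ℝ 2 ν} {μ : ℕ → ℝ}

theorem opA_sub_Psitrunc_Gtrunc {f : Lp ℝ 2 ν}
    (hf : Summable fun k => (μ k * ⟪f, w k⟫) • w k) (fδ : Lp ℝ 2 ν) (N : ℕ) :
    opA ν w μ f - Psitrunc ν w μ N (Gtrunc ν w N fδ) =
      ∑ k ∈ Finset.range N, (μ k * ⟪f - fδ, w k⟫) • w k +
        ∑' k, (μ (k + N) * ⟪f, w (k + N)⟫) • w (k + N) := by
  simp only [opA, Psitrunc, Gtrunc]
  rw [← hf.sum_add_tsum_nat_add N,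
    Fin.sum_univ_eq_sum_range (fun k => (μ k * ⟪fδ, w k⟫) • w k) N]
  simp only [inner_sub_left, mul_sub, sub_smul, Finset.sum_sub_distrib]
  abel

theorem ae_norm_opA_sub_Psitrunc_Gtrunc_le (hw : Orthonormal ℝ w) {χ : ℝ} (hχ : 0 ≤ χ)
    (hwχ : ∀ k, ∀ᵐ x ∂ν, ‖w k x‖ ≤ χ) {f : Lp ℝ 2 ν}
    (hf : Summable fun k => |μ k * ⟪f, w k⟫|) (fδ : Lp ℝ 2 ν) (N : ℕ) :
    ∀ᵐ x ∂ν, ‖(opA ν w μ f : EuclideanSpace ℝ (Fin d) → ℝ) x -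
        (Psitrunc ν w μ N (Gtrunc ν w N fδ) : EuclideanSpace ℝ (Fin d) → ℝ) x‖ ≤
      (∑ k ∈ Finset.range N, |μ k * ⟪f - fδ, w k⟫| +
        ∑' k, |μ (k + N) * ⟪f, w (k + N)⟫|) * χ := by
  have hsmul (c : ℝ) (k : ℕ) : ∀ᵐ x ∂ν, ‖(c • w k) x‖ ≤ |c| * χ :=
    Lp.ae_norm_smul_le c (hwχ k)
  have hsum : Summable fun k => (μ k * ⟪f, w k⟫) • w k :=
    .of_norm <| by simpa only [norm_smul, hw.1, mul_one, Real.norm_eq_abs] using hf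
  filter_upwards [Lp.coeFn_sub (opA ν w μ f) (Psitrunc ν w μ N (Gtrunc ν w N fδ)),
    Lp.coeFn_add (∑ k ∈ Finset.range N, (μ k * ⟪f - fδ, w k⟫) • w k)
      (∑' k, (μ (k + N) * ⟪f, w (k + N)⟫) • w (k + N)),
    Lp.ae_norm_sum_le (Finset.range N) fun k => hsmul (μ k * ⟪f - fδ, w k⟫) k,
    Lp.ae_norm_tsum_le (hsum.comp_injective (add_left_injective N))
      ((hf.mul_right χ).comp_injective (add_left_injective N))
      (fun _ => mul_nonneg (abs_nonneg _) hχ) fun k => hsmul _ (k + N)] with x hsub hadd hhead htail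
  rw [← Pi.sub_apply, ← hsub, opA_sub_Psitrunc_Gtrunc hsum, hadd, Pi.add_apply, add_mul,
    Finset.sum_mul, ← tsum_mul_right]
  exact (norm_add_le _ _).trans (add_le_add hhead htail)

end Truncation

theorem stmt15_general
    (Q : Set (EuclideanSpace ℝ (Fin d))) (hQc : IsCompact Q)
    (w : ℕ → Lp ℝ 2 (MeasureTheory.volume.restrict Q)) (hw_on : Orthonormal ℝ w)
    (χ : ℝ) (hχ : 0 < χ)
    (hw_cont : ∀ k : ℕ, ∃ g : EuclideanSpace ℝ (Fin d) → ℝ, ContinuousOn g Q ∧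
      (∀ x ∈ Q, |g x| ≤ χ) ∧ (w k : EuclideanSpace ℝ (Fin d) → ℝ) =ᵐ[MeasureTheory.volume.restrict Q] g)
    (μ ξ : ℕ → ℝ)
    (hμ0 : 0 < μ 0) (hμmono : Monotone μ)
    (hξ0 : 0 < ξ 0) (hξmono : Monotone ξ)
    (c₁ c₂ : ℝ)
    (hsum : Summable fun k => (μ k / ξ k) ^ 2)
    (hc₁' : ∀ N : ℕ, Real.sqrt (∑ k ∈ Finset.range (N + 1), μ k ^ 2) ≤ c₁ * μ N)
    (hc₂' : ∀ N : ℕ, Real.sqrt (∑' j : ℕ, (μ (N + j) / ξ (N + j)) ^ 2) ≤ c₂ * (μ N / ξ N)) :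
    ∀ p : ℝ≥0∞, 2 ≤ p → ∀ δ : ℝ, 0 < δ → ∀ N : ℕ, 1 ≤ N →
      truncErrLq (MeasureTheory.volume.restrict Q) w μ ξ p δ N ≤
        MeasureTheory.volume Q ^ (1 / p).toReal *
          ENNReal.ofReal (max c₁ c₂ * χ * (μ N / ξ N + δ * μ (N - 1))) := by
  intro p _ δ hδ N hN
  have hμ (k : ℕ) : 0 ≤ μ k := hμ0.le.trans (hμmono k.zero_le)
  have hξ (k : ℕ) : 0 < ξ k := hξ0.trans_le (hξmono k.zero_le)
  have hwχ (k : ℕ) : ∀ᵐ x ∂volume.restrict Q, ‖w k x‖ ≤ χ := by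
    obtain ⟨g, -, hgχ, hwg⟩ := hw_cont k
    exact ae_restrict_norm_le_of_ae_eq hQc.measurableSet hwg hgχ
  refine iSup₂_le fun f hf => iSup₂_le fun fδ hfδ => ?_
  have hhead : ∑ k ∈ Finset.range N, |μ k * ⟪f - fδ, w k⟫| ≤ c₁ * μ (N - 1) * δ := by
    have hc₁N := hc₁' (N - 1)
    rw [Nat.sub_add_cancel hN] at hc₁N
    exact (hw_on.sum_abs_mul_inner_le _ _ _).trans <|
      mul_le_mul hc₁N hfδ (norm_nonneg _) ((Real.sqrt_nonneg _).trans hc₁N)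
  have htail : ∑' k, |μ (k + N) * ⟪f, w (k + N)⟫| ≤ c₂ * (μ N / ξ N) := by
    have hc₂N := hc₂' N
    simp only [add_comm N] at hc₂N
    simpa only [mul_one] using
      (Real.tsum_abs_mul_nat_add_le (fun k => (hξ k).ne') hsum hf.1 N).trans <|
        mul_le_mul hc₂N hf.2 (Real.sqrt_nonneg _) ((Real.sqrt_nonneg _).trans hc₂N)
  have hbound : (∑ k ∈ Finset.range N, |μ k * ⟪f - fδ, w k⟫| +
      ∑' k, |μ (k + N) * ⟪f, w (k + N)⟫|) * χ ≤
        max c₁ c₂ * χ * (μ N / ξ N + δ * μ (N - 1)) := by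
    have hc₁max := mul_nonneg (sub_nonneg.2 (le_max_left c₁ c₂)) (mul_nonneg (hμ (N - 1)) hδ.le)
    have hc₂max := mul_nonneg (sub_nonneg.2 (le_max_right c₁ c₂)) (div_nonneg (hμ N) (hξ N).le)
    nlinarith
  calc _ ≤ (volume.restrict Q) Set.univ ^ p.toReal⁻¹ * ENNReal.ofReal _ :=
        eLpNorm_le_of_ae_bound <| ae_norm_opA_sub_Psitrunc_Gtrunc_le hw_on hχ.le hwχ
          (Real.summable_abs_mul_of_summable_div_sq (fun k => (hξ k).ne') hsum hf.1) fδ N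
    _ ≤ _ := by
      rw [Measure.restrict_apply_univ, one_div, ENNReal.toReal_inv]
      gcongr

/-- upper bound in `L_q` for the truncation method. -/
theorem stmt15
    (Q : Set (EuclideanSpace ℝ (Fin d))) (hQc : IsCompact Q)
    (hQ0 : 0 < MeasureTheory.volume Q) (hQfin : MeasureTheory.volume Q < ⊤)
    (w : ℕ → Lp ℝ 2 (MeasureTheory.volume.restrict Q)) (hw_on : Orthonormal ℝ w)
    (hw_dense : Dense (Submodule.span ℝ (Set.range w) : Set (Lp ℝ 2 (MeasureTheory.volume.restrict Q))))
    (χ : ℝ) (hχ : 0 < χ)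
    (hw_cont : ∀ k : ℕ, ∃ g : EuclideanSpace ℝ (Fin d) → ℝ, ContinuousOn g Q ∧
      (∀ x ∈ Q, |g x| ≤ χ) ∧ (w k : EuclideanSpace ℝ (Fin d) → ℝ) =ᵐ[MeasureTheory.volume.restrict Q] g)
    (μ ξ : ℕ → ℝ)
    (hμ0 : 0 < μ 0) (hμmono : Monotone μ) (hμtop : Tendsto μ atTop atTop)
    (hξ0 : 0 < ξ 0) (hξmono : Monotone ξ) (hξtop : Tendsto ξ atTop atTop)
    (hanti : Antitone fun k => μ k / ξ k)
    (hratio : Tendsto (fun k => μ k / ξ k) atTop (nhds 0))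
    (c₁ c₂ : ℝ) (hc₁ : 0 < c₁) (hc₂ : 0 < c₂)
    (hsum : Summable fun k => (μ k / ξ k) ^ 2)
    (hc₁' : ∀ N : ℕ, Real.sqrt (∑ k ∈ Finset.range (N + 1), μ k ^ 2) ≤ c₁ * μ N)
    (hc₂' : ∀ N : ℕ, Real.sqrt (∑' j : ℕ, (μ (N + j) / ξ (N + j)) ^ 2) ≤ c₂ * (μ N / ξ N)) :
    ∀ p : ℝ≥0∞, 2 ≤ p → ∀ δ : ℝ, 0 < δ → ∀ N : ℕ, 1 ≤ N →
      truncErrLq (MeasureTheory.volume.restrict Q) w μ ξ p δ N ≤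
        MeasureTheory.volume Q ^ (1 / p).toReal *
          ENNReal.ofReal (max c₁ c₂ * χ * (μ N / ξ N + δ * μ (N - 1))) :=
  stmt15_general Q hQc w hw_on χ hχ hw_cont μ ξ hμ0 hμmono hξ0 hξmono c₁ c₂ hsum hc₁' hc₂'
end
end
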